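/- arXiv:2208.05883 — 2 statements merged into one kernel-verified Lean document; each statement's English description precedes it below -/
import Mathlib

section
/- If r and R are differentiable functions satisfying the coupled Riccati equations r' = ((n+r)/2)·R - (r² - λr)/R and R' = λ - 2r - R(t+R)/2 (with R nonvanishing), then r satisfies the second-order ODE 4[r'' + 3r² + 2(n-λ)r - nλ]² = t²[(r')² + 2r³ + 2(n-λ)r² - 2nλr]. -/
/-!
Write the first equation as `r' = P - Q` with `P = (n + r) R / 2` and `Q = (r² - λ r) / R`, and
put `S = P + Q`. Since `4 P Q = 2 r³ + 2 (n - λ) r² - 2 n λ r`, the right-hand bracket is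
`(P - Q)² + 4 P Q = S²`. Differentiating `r' = P - Q` once more and eliminating `r'` and `R'`
with the two equations gives `r'' + 3 r² + 2 (n - λ) r - n λ = -(t / 2) S`; squaring finishes.
-/

theorem riccati_sq_add_cubic (n lam r R : ℝ) (hR : R ≠ 0) :
    ((n + r) / 2 * R - (r ^ 2 - lam * r) / R) ^ 2 + 2 * r ^ 3 + 2 * (n - lam) * r ^ 2
      - 2 * n * lam * r = ((n + r) / 2 * R + (r ^ 2 - lam * r) / R) ^ 2 := by
  field_simp
  ring

theorem riccati_second_derivative_identity (n lam t r R r' R' r'' : ℝ) (hR : R ≠ 0)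
    (hr' : r' = (n + r) / 2 * R - (r ^ 2 - lam * r) / R)
    (hR' : R' = lam - 2 * r - R * (t + R) / 2)
    (hr'' : r'' = r' / 2 * R + (n + r) / 2 * R'
      - ((2 * r - lam) * r' * R - (r ^ 2 - lam * r) * R') / R ^ 2) :
    r'' + 3 * r ^ 2 + 2 * (n - lam) * r - n * lam
      = -(t / 2) * ((n + r) / 2 * R + (r ^ 2 - lam * r) / R) := by
  subst hr'' hr' hR'
  field_simp
  ring

theorem hasDerivAt_riccati_rhs {n lam t : ℝ} {r R : ℝ → ℝ} {r' R' : ℝ}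
    (hr : HasDerivAt r r' t) (hR : HasDerivAt R R' t) (hRt : R t ≠ 0) :
    HasDerivAt (fun s => (n + r s) / 2 * R s - (r s ^ 2 - lam * r s) / R s)
      (r' / 2 * R t + (n + r t) / 2 * R'
        - ((2 * r t - lam) * r' * R t - (r t ^ 2 - lam * r t) * R') / R t ^ 2) t := by
  refine (((((hasDerivAt_const t n).add hr).div_const 2).mul hR).sub
    (((hr.pow 2).sub (hr.const_mul lam)).div hR hRt)).congr_deriv ?_
  simp only [Pi.add_apply, Pi.sub_apply, Pi.pow_apply]
  ring

theorem coupled_riccati_to_second_order_general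
    (n lam : ℝ) (r R : ℝ → ℝ)
    (hr : ∀ t, DifferentiableAt ℝ r t)
    (hR : ∀ t, DifferentiableAt ℝ R t)
    (hRne : ∀ t, R t ≠ 0)
    (eq1 : ∀ t, deriv r t = (n + r t) / 2 * R t - (r t ^ 2 - lam * r t) / R t)
    (eq2 : ∀ t, deriv R t = lam - 2 * r t - R t * (t + R t) / 2) :
    ∀ t, 4 * (deriv (deriv r) t + 3 * r t ^ 2 + 2 * (n - lam) * r t - n * lam) ^ 2
      = t ^ 2 * ((deriv r t) ^ 2 + 2 * r t ^ 3 + 2 * (n - lam) * r t ^ 2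
          - 2 * n * lam * r t) := by
  intro t
  have hr'' : HasDerivAt (deriv r) _ t :=
    (hasDerivAt_riccati_rhs (hr t).hasDerivAt (hR t).hasDerivAt (hRne t)).congr_of_eventuallyEq
      (.of_forall eq1)
  have hsecond := riccati_second_derivative_identity n lam t (r t) (R t) _ _ _ (hRne t)
    (eq1 t) (eq2 t) hr''.deriv
  rw [hsecond, eq1 t, riccati_sq_add_cubic n lam (r t) (R t) (hRne t)]
  ring

theorem coupled_riccati_to_second_order
    (n lam : ℝ) (r R : ℝ → ℝ)
    (hr : ∀ t, DifferentiableAt ℝ r t)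
    (hr' : ∀ t, DifferentiableAt ℝ (deriv r) t)
    (hR : ∀ t, DifferentiableAt ℝ R t)
    (hRne : ∀ t, R t ≠ 0)
    (eq1 : ∀ t, deriv r t = (n + r t) / 2 * R t - (r t ^ 2 - lam * r t) / R t)
    (eq2 : ∀ t, deriv R t = lam - 2 * r t - R t * (t + R t) / 2) :
    ∀ t, 4 * (deriv (deriv r) t + 3 * r t ^ 2 + 2 * (n - lam) * r t - n * lam) ^ 2
      = t ^ 2 * ((deriv r t) ^ 2 + 2 * r t ^ 3 + 2 * (n - lam) * r t ^ 2
          - 2 * n * lam * r t) :=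
  coupled_riccati_to_second_order_general n lam r R hr hR hRne eq1 eq2
end

section
/- Suppose sequences α_n and β_n admit large-n expansions α_n = √(2n/3) + a₀ + a₁/√n + O(1/n) and β_n = n/6 + b₋₁√n + b₀ + O(1/√n), and satisfy for all n the discrete system α_n(2α_n - t) + 2β_n + 2β_{n+1} = 2n + 1 + λ and (2α_n - t)(2α_{n-1} - t)β_n = (2β_n - n)(2β_n - n - λ). Then necessarily a₀ = t/6, b₋₁ = t/(6√6), a₁ = (t² + 12(1+λ))/(24√6), and b₀ = (t² + 6λ)/72. -/
/-!
Put `r = √(2/3)`, write `α n = r √n + a₀ + A n / √n` and `β n = n/6 + b₋₁ √n + B n`; the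
hypotheses give `A n → a₁` and `B n → b₀`, and the shift `n ↦ n - 1` costs `r/2` in the limit of
`A`. Substituting into the first equation divided by `√n`, and into the second divided by
`n^{3/2}` (the orders `n` and `n²` cancel because `r² = 2/3`), each becomes `c + g n / √n = 0`
with `c` a constant and `g` convergent, so both `c` and `lim g` vanish. This yields four
equations, triangular in `a₀, b₋₁` and then `a₁, b₀`.
-/

open Real Filter Asymptotics Topology

theorem eq_zero_and_eq_zero_of_eventually_add_mul_eq_zero {ι : Type*} {l : Filter ι} [l.NeBot]
    {x g : ι → ℝ} {c L : ℝ} (hx : Tendsto x l (𝓝 0)) (hx0 : ∀ᶠ i in l, x i ≠ 0)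
    (hg : Tendsto g l (𝓝 L)) (h : ∀ᶠ i in l, c + x i * g i = 0) : c = 0 ∧ L = 0 := by
  have hc : c = 0 := by
    have hlim : Tendsto (fun i => c + x i * g i) l (𝓝 c) := by
      simpa using tendsto_const_nhds.add (hx.mul hg)
    exact tendsto_nhds_unique hlim (tendsto_const_nhds.congr' (h.mono fun i hi => hi.symm))
  refine ⟨hc, tendsto_nhds_unique hg (tendsto_const_nhds.congr' ?_)⟩
  filter_upwards [h, hx0] with i hi hxi
  simpa [hc, hxi, eq_comm] using hi

theorem tendsto_inv_sqrt_natCast_atTop : Tendsto (fun n : ℕ => (√n)⁻¹) atTop (𝓝 0) :=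
  tendsto_inv_atTop_zero.comp (tendsto_sqrt_atTop.comp tendsto_natCast_atTop_atTop)

theorem tendsto_sqrt_succ_sub_sqrt : Tendsto (fun n : ℕ => √(n + 1) - √n) atTop (𝓝 0) := by
  have hsum : Tendsto (fun n : ℕ => √(n + 1) + √n) atTop atTop :=
    tendsto_atTop_mono (fun _ => le_add_of_nonneg_left (sqrt_nonneg _))
      (tendsto_sqrt_atTop.comp tendsto_natCast_atTop_atTop)
  refine (tendsto_inv_atTop_zero.comp hsum).congr fun n => ?_
  have hpos : 0 < √(n + 1) + √n := by positivity
  rw [Function.comp_apply, eq_comm, ← one_div, eq_div_iff hpos.ne']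
  linear_combination sq_sqrt (by positivity : (0 : ℝ) ≤ n + 1) - sq_sqrt (n.cast_nonneg' (α := ℝ))

theorem tendsto_sqrt_pred_div_sqrt : Tendsto (fun n : ℕ => √(n - 1) / √n) atTop (𝓝 1) := by
  have h1 : Tendsto (fun n : ℕ => 1 - (n : ℝ)⁻¹) atTop (𝓝 1) := by
    simpa using tendsto_const_nhds.sub (tendsto_inv_atTop_nhds_zero_nat (𝕜 := ℝ))
  have h : Tendsto (fun n : ℕ => √(1 - (n : ℝ)⁻¹)) atTop (𝓝 1) := by
    simpa [Function.comp_def] using (continuous_sqrt.tendsto 1).comp h1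
  refine h.congr' ?_
  filter_upwards [eventually_ge_atTop 1] with n hn
  have hn' : (1 : ℝ) ≤ n := by exact_mod_cast hn
  rw [← sqrt_div (by linarith), sub_div, div_self (by positivity), one_div]

theorem tendsto_succ_sub_mul_sqrt {g : ℕ → ℝ} {b L : ℝ}
    (hg : Tendsto (fun n : ℕ => g n - b * √n) atTop (𝓝 L)) :
    Tendsto (fun n : ℕ => g (n + 1) - b * √n) atTop (𝓝 L) := by
  have h := (hg.comp (tendsto_add_atTop_nat 1)).add (tendsto_sqrt_succ_sub_sqrt.const_mul b)
  rw [mul_zero, add_zero] at h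
  refine h.congr fun n => ?_
  simp only [Function.comp_apply, Nat.cast_add, Nat.cast_one]
  ring

theorem tendsto_sqrt_mul_pred_sub {f : ℕ → ℝ} {c a : ℝ}
    (hf : Tendsto (fun n : ℕ => √n * (f n - c * √n)) atTop (𝓝 a)) :
    Tendsto (fun n : ℕ => √n * (f (n - 1) - c * √n)) atTop (𝓝 (a - c / 2)) := by
  have hρ := tendsto_sqrt_pred_div_sqrt
  have h := ((hρ.inv₀ one_ne_zero).mul (hf.comp (tendsto_sub_atTop_nat 1))).sub
    (((hρ.const_add 1).inv₀ (by norm_num)).const_mul c)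
  rw [show (1 : ℝ)⁻¹ * a - c * (1 + 1)⁻¹ = a - c / 2 by ring] at h
  refine h.congr' ?_
  filter_upwards [eventually_ge_atTop 2] with n hn
  have hn' : (2 : ℝ) ≤ n := by exact_mod_cast hn
  have hs : 0 < √(n : ℝ) := sqrt_pos.mpr (by linarith)
  have hs' : 0 < √((n : ℝ) - 1) := sqrt_pos.mpr (by linarith)
  simp only [Function.comp_apply, Nat.cast_sub (by omega : 1 ≤ n), Nat.cast_one]
  field_simp
  linear_combination
    c * (sq_sqrt (by linarith : (0 : ℝ) ≤ n) - sq_sqrt (by linarith : (0 : ℝ) ≤ n - 1))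

theorem tendsto_sqrt_mul_of_isBigO_inv {f : ℕ → ℝ} {a : ℝ}
    (h : (fun n : ℕ => f n - a / √n) =O[atTop] fun n : ℕ => (n : ℝ)⁻¹) :
    Tendsto (fun n : ℕ => √n * f n) atTop (𝓝 a) := by
  have hO : (fun n : ℕ => √n * (f n - a / √n)) =O[atTop] fun n : ℕ => (√n)⁻¹ :=
    ((isBigO_refl _ _).mul h).congr_right fun n => by rw [← div_eq_mul_inv, sqrt_div_self]
  have h0 := (hO.trans_tendsto tendsto_inv_sqrt_natCast_atTop).add_const a
  rw [zero_add] at h0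
  refine h0.congr' ?_
  filter_upwards [eventually_ge_atTop 1] with n hn
  have hs : √(n : ℝ) ≠ 0 := (sqrt_pos.mpr (by exact_mod_cast hn)).ne'
  field_simp
  ring

theorem coeff_relations_of_first_equation {t lam r a0 a1 bm1 b0 : ℝ} {α β : ℕ → ℝ}
    (hr : r ^ 2 = 2 / 3)
    (hA : Tendsto (fun n : ℕ => √n * (α n - r * √n - a0)) atTop (𝓝 a1))
    (hB : Tendsto (fun n : ℕ => β n - n / 6 - bm1 * √n) atTop (𝓝 b0))
    (heq1 : ∀ n : ℕ, 1 ≤ n →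
      α n * (2 * α n - t) + 2 * β n + 2 * β (n + 1) = 2 * n + 1 + lam) :
    4 * r * a0 - r * t + 4 * bm1 = 0 ∧
      4 * r * a1 + 4 * b0 + a0 * (2 * a0 - t) - 2 / 3 - lam = 0 := by
  set y : ℕ → ℝ := fun n => (√n)⁻¹
  set A : ℕ → ℝ := fun n => √n * (α n - r * √n - a0)
  set B : ℕ → ℝ := fun n => β n - n / 6 - bm1 * √n
  -- `α n = r √n + N n` and `β (n + 1) = (n + 1) / 6 + bm1 √n + B' n`
  set N : ℕ → ℝ := fun n => a0 + A n * y n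
  set B' : ℕ → ℝ := fun n => β (n + 1) - (n + 1) / 6 - bm1 * √n
  have hy : Tendsto y atTop (𝓝 0) := tendsto_inv_sqrt_natCast_atTop
  have hB' : Tendsto B' atTop (𝓝 b0) := by
    simpa [B'] using tendsto_succ_sub_mul_sqrt (g := fun n => β n - n / 6) hB
  have hN : Tendsto N atTop (𝓝 a0) := by simpa using (hA.mul hy).const_add a0
  refine eq_zero_and_eq_zero_of_eventually_add_mul_eq_zero (x := y)
    (g := fun n => 4 * r * A n + 2 * B n + N n * (2 * N n - t) + 2 * B' n - 2 / 3 - lam)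
    hy ?_ ?_ ?_
  · filter_upwards [eventually_ge_atTop 1] with n hn
    exact inv_ne_zero (sqrt_pos.mpr (by exact_mod_cast hn)).ne'
  · convert (((((hA.const_mul (4 * r)).add (hB.const_mul 2)).add
      (hN.mul ((hN.const_mul 2).sub_const t))).add (hB'.const_mul 2)).sub_const (2 / 3)).sub_const
      lam using 2
    ring
  · filter_upwards [eventually_ge_atTop 1] with n hn
    have h := heq1 n hn
    have hs : 0 < √(n : ℝ) := sqrt_pos.mpr (by exact_mod_cast hn)
    have hs2 : √(n : ℝ) ^ 2 = n := sq_sqrt n.cast_nonneg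
    simp only [y, A, B, B', N]
    set s := √(n : ℝ)
    rw [← hs2] at h ⊢
    linear_combination (norm := (field_simp; ring)) s⁻¹ * h - 2 * s * hr

theorem coeff_relations_of_second_equation {t lam r a0 a1 bm1 b0 : ℝ} {α β : ℕ → ℝ}
    (hr : r ^ 2 = 2 / 3)
    (hA : Tendsto (fun n : ℕ => √n * (α n - r * √n - a0)) atTop (𝓝 a1))
    (hB : Tendsto (fun n : ℕ => β n - n / 6 - bm1 * √n) atTop (𝓝 b0))
    (heq2 : ∀ n : ℕ, 1 ≤ n →
      (2 * α n - t) * (2 * α (n - 1) - t) * β n = (2 * β n - n) * (2 * β n - n - lam)) :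
    16 / 3 * bm1 + 2 / 3 * r * (2 * a0 - t) = 0 ∧
      16 / 3 * b0 + 2 * r / 3 * (2 * a1 - r / 2) + (2 * a0 - t) ^ 2 / 6
        + 4 * r * (2 * a0 - t) * bm1 - 4 * bm1 ^ 2 - 2 * lam / 3 = 0 := by
  set y : ℕ → ℝ := fun n => (√n)⁻¹
  set A : ℕ → ℝ := fun n => √n * (α n - r * √n - a0)
  set A' : ℕ → ℝ := fun n => √n * (α (n - 1) - r * √n - a0)
  set B : ℕ → ℝ := fun n => β n - n / 6 - bm1 * √n
  -- `2 α n - t = 2 r √n + P n`, `2 α (n - 1) - t = 2 r √n + P' n`, `β n = n / 6 + √n M n`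
  set P : ℕ → ℝ := fun n => 2 * a0 - t + 2 * A n * y n
  set P' : ℕ → ℝ := fun n => 2 * a0 - t + 2 * A' n * y n
  set M : ℕ → ℝ := fun n => bm1 + B n * y n
  have hy : Tendsto y atTop (𝓝 0) := tendsto_inv_sqrt_natCast_atTop
  have hA' : Tendsto A' atTop (𝓝 (a1 - r / 2)) :=
    (tendsto_sqrt_mul_pred_sub (f := fun n => α n - a0) (hA.congr fun n => by ring)).congr
      fun n => by ring
  have hP : Tendsto P atTop (𝓝 (2 * a0 - t)) := by
    simpa using ((hA.const_mul 2).mul hy).const_add (2 * a0 - t)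
  have hP' : Tendsto P' atTop (𝓝 (2 * a0 - t)) := by
    simpa using ((hA'.const_mul 2).mul hy).const_add (2 * a0 - t)
  have hM : Tendsto M atTop (𝓝 bm1) := by simpa using (hB.mul hy).const_add bm1
  refine eq_zero_and_eq_zero_of_eventually_add_mul_eq_zero (x := y)
    (g := fun n => 16 / 3 * B n + 2 * r / 3 * (A n + A' n) + P n * P' n / 6
      + 2 * r * (P n + P' n) * M n - 4 * M n ^ 2 + lam * (2 * y n * M n - 2 / 3)
      + y n * P n * P' n * M n) hy ?_ ?_ ?_
  · filter_upwards [eventually_ge_atTop 1] with n hn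
    exact inv_ne_zero (sqrt_pos.mpr (by exact_mod_cast hn)).ne'
  · convert ((((((hB.const_mul (16 / 3)).add ((hA.add hA').const_mul (2 * r / 3))).add
      ((hP.mul hP').div_const 6)).add (((hP.add hP').const_mul (2 * r)).mul hM)).sub
      ((hM.pow 2).const_mul 4)).add
      ((((hy.const_mul 2).mul hM).sub_const (2 / 3)).const_mul lam)).add
      (((hy.mul hP).mul hP').mul hM) using 2
    ring
  · filter_upwards [eventually_ge_atTop 1] with n hn
    have h := heq2 n hn
    have hs : 0 < √(n : ℝ) := sqrt_pos.mpr (by exact_mod_cast hn)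
    have hs2 : √(n : ℝ) ^ 2 = n := sq_sqrt n.cast_nonneg
    simp only [y, A, A', B, P, P', M]
    set s := √(n : ℝ)
    rw [← hs2] at h ⊢
    linear_combination (norm := (field_simp; ring)) s⁻¹ ^ 3 * h - 4 * s⁻¹ * β n * hr

theorem coeffs_eq_of_coeff_relations {t lam r a0 a1 bm1 b0 : ℝ} (hr : r * √6 = 2)
    (h1 : 4 * r * a0 - r * t + 4 * bm1 = 0)
    (h2 : 4 * r * a1 + 4 * b0 + a0 * (2 * a0 - t) - 2 / 3 - lam = 0)
    (h3 : 16 / 3 * bm1 + 2 / 3 * r * (2 * a0 - t) = 0)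
    (h4 : 16 / 3 * b0 + 2 * r / 3 * (2 * a1 - r / 2) + (2 * a0 - t) ^ 2 / 6
        + 4 * r * (2 * a0 - t) * bm1 - 4 * bm1 ^ 2 - 2 * lam / 3 = 0) :
    a0 = t / 6 ∧ bm1 = t / (6 * √6) ∧ a1 = (t ^ 2 + 12 * (1 + lam)) / (24 * √6)
      ∧ b0 = (t ^ 2 + 6 * lam) / 72 := by
  have hs6 : 0 < √6 := by positivity
  have h6r : √6 = 3 * r := by
    have h : √6 * (√6 - 3 * r) = 0 := by
      linear_combination sq_sqrt (by norm_num : (0 : ℝ) ≤ 6) - 3 * hr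
    linear_combination (mul_eq_zero.mp h).resolve_left hs6.ne'
  have hr2 : r ^ 2 = 2 / 3 := by linear_combination (hr - r * h6r) / 3
  have hr0 : r ≠ 0 := by rintro rfl; norm_num at hr
  have ha0 : a0 = t / 6 := by
    have h : r * (a0 - t / 6) = 0 := by linear_combination h1 / 3 - h3 / 4
    linear_combination (mul_eq_zero.mp h).resolve_left hr0
  subst ha0
  have hbm1 : bm1 = t * r / 12 := by linear_combination 3 / 16 * h3
  subst hbm1
  have hb0 : b0 = (t ^ 2 + 6 * lam) / 72 := by
    linear_combination -h2 / 12 + h4 / 4 + (t ^ 2 / 16 + 1 / 12) * hr2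
  refine ⟨rfl, ?_, ?_, hb0⟩
  · rw [eq_div_iff (by positivity)]
    linear_combination t / 2 * hr
  · rw [eq_div_iff (by positivity)]
    linear_combination 24 * a1 * h6r + 18 * (h2 - 4 * hb0)

theorem recurrence_coeff_expansion_coeffs
    (t lam : ℝ) (α β : ℕ → ℝ) (a0 a1 bm1 b0 : ℝ)
    (hα : (fun n : ℕ => α n - Real.sqrt (2 * n / 3) - a0 - a1 / Real.sqrt n)
        =O[atTop] fun n : ℕ => (n : ℝ)⁻¹)
    (hβ : (fun n : ℕ => β n - n / 6 - bm1 * Real.sqrt n - b0)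
        =O[atTop] fun n : ℕ => ((n : ℝ) ^ ((1 : ℝ) / 2))⁻¹)
    (heq1 : ∀ n : ℕ, 1 ≤ n →
      α n * (2 * α n - t) + 2 * β n + 2 * β (n + 1) = 2 * n + 1 + lam)
    (heq2 : ∀ n : ℕ, 1 ≤ n →
      (2 * α n - t) * (2 * α (n - 1) - t) * β n
        = (2 * β n - n) * (2 * β n - n - lam)) :
    a0 = t / 6 ∧ bm1 = t / (6 * Real.sqrt 6)
      ∧ a1 = (t ^ 2 + 12 * (1 + lam)) / (24 * Real.sqrt 6)
      ∧ b0 = (t ^ 2 + 6 * lam) / 72 := by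
  have hr2 : √(2 / 3) ^ 2 = 2 / 3 := sq_sqrt (by norm_num)
  have hr6 : √(2 / 3) * √6 = 2 := by
    rw [← sqrt_mul (by norm_num), show (2 / 3 * 6 : ℝ) = 2 ^ 2 by norm_num, sqrt_sq zero_le_two]
  have hA : Tendsto (fun n : ℕ => √n * (α n - √(2 / 3) * √n - a0)) atTop (𝓝 a1) :=
    tendsto_sqrt_mul_of_isBigO_inv <| hα.congr_left fun n => by
      rw [← sqrt_mul (by norm_num), div_mul_eq_mul_div, mul_comm]
  have hB : Tendsto (fun n : ℕ => β n - n / 6 - bm1 * √n) atTop (𝓝 b0) :=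
    tendsto_sub_nhds_zero_iff.mp <| hβ.trans_tendsto
      ((tendsto_rpow_atTop (by norm_num)).comp tendsto_natCast_atTop_atTop).inv_tendsto_atTop
  obtain ⟨h1, h2⟩ := coeff_relations_of_first_equation hr2 hA hB heq1
  obtain ⟨h3, h4⟩ := coeff_relations_of_second_equation hr2 hA hB heq2
  exact coeffs_eq_of_coeff_relations hr6 h1 h2 h3 h4
end
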